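/- arXiv:1611.04187 — 6 statements merged into one kernel-verified Lean document; each statement's English description precedes it below -/
import Mathlib

section
/- For every graph G with n vertices, the sum over all edges uv of 1/(d_u + d_v) is at most n/4. -/
open Finset Real

variable {V : Type*}

noncomputable def edgeSum (G : SimpleGraph V) [Fintype V] [DecidableRel G.Adj]
    (f : ℝ → ℝ → ℝ) (hf : ∀ a b, f a b = f b a) : ℝ :=
  ∑ e ∈ G.edgeFinset,
    Sym2.lift ⟨fun u v => f (G.degree u) (G.degree v), fun u v => hf _ _⟩ e

noncomputable def GA1 (G : SimpleGraph V) [Fintype V] [DecidableRel G.Adj] : ℝ :=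
  edgeSum G (fun x y => 2 * Real.sqrt (x * y) / (x + y))
    (fun a b => by (try dsimp only); rw [mul_comm a b, add_comm a b])

noncomputable def M1 (G : SimpleGraph V) [Fintype V] [DecidableRel G.Adj] : ℝ :=
  ∑ u : V, (G.degree u : ℝ) ^ 2

noncomputable def M2 (G : SimpleGraph V) [Fintype V] [DecidableRel G.Adj] : ℝ :=
  edgeSum G (fun x y => x * y) (fun a b => mul_comm a b)

noncomputable def randic (G : SimpleGraph V) [Fintype V] [DecidableRel G.Adj] : ℝ :=
  edgeSum G (fun x y => 1 / Real.sqrt (x * y)) (fun a b => by (try dsimp only); rw [mul_comm a b])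

noncomputable def genRandic (G : SimpleGraph V) [Fintype V] [DecidableRel G.Adj] (α : ℝ) : ℝ :=
  edgeSum G (fun x y => (x * y) ^ α) (fun a b => by (try dsimp only); rw [mul_comm a b])

noncomputable def modZagreb (G : SimpleGraph V) [Fintype V] [DecidableRel G.Adj] : ℝ :=
  edgeSum G (fun x y => 1 / (x * y)) (fun a b => by (try dsimp only); rw [mul_comm a b])

noncomputable def NKstar (G : SimpleGraph V) [Fintype V] [DecidableRel G.Adj] : ℝ :=
  ∏ e ∈ G.edgeFinset,
    Sym2.lift ⟨fun u v => ((G.degree u : ℝ) * (G.degree v : ℝ)), fun u v => mul_comm _ _⟩ e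

def GraphRegular (G : SimpleGraph V) [Fintype V] [DecidableRel G.Adj] : Prop :=
  ∃ k, G.IsRegularOfDegree k

/-! Each term obeys the harmonic–arithmetic mean bound `1/(a+b) ≤ (1/a + 1/b)/4`. Splitting every
edge term this way and regrouping by vertices, a vertex `v` receives `1/(4 d_v)` once from each of
its `d_v` edges, so it contributes at most `1/4`. -/

lemma inv_add_le_inv_add_inv_div_four {a b : ℝ} (ha : 0 < a) (hb : 0 < b) :
    (a + b)⁻¹ ≤ (a⁻¹ + b⁻¹) / 4 := by
  rw [inv_add_inv ha.ne' hb.ne', div_div, ← one_div,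
    div_le_div_iff₀ (by positivity) (by positivity)]
  nlinarith [sq_nonneg (a - b)]

namespace SimpleGraph

variable {M : Type*} [AddCommMonoid M] (G : SimpleGraph V) [Fintype V] [DecidableRel G.Adj]

theorem sum_darts_fst_eq_sum_degree_smul (g : V → M) :
    ∑ d : G.Dart, g d.fst = ∑ v, G.degree v • g v := by
  classical
  rw [← sum_fiberwise univ (fun d : G.Dart => d.fst)]
  refine sum_congr rfl fun v _ => ?_
  rw [sum_congr rfl fun d hd => congrArg g (mem_filter.1 hd).2, sum_const,
    ← dart_fst_fiber_card_eq_degree]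

theorem sum_darts_fst_eq_sum_edgeFinset (g : V → M) :
    ∑ d : G.Dart, g d.fst =
      ∑ e ∈ G.edgeFinset, Sym2.lift ⟨fun u v => g u + g v, fun _ _ => add_comm _ _⟩ e := by
  classical
  rw [← sum_fiberwise_of_maps_to (fun d _ => mem_edgeFinset.2 d.edge_mem)]
  refine sum_congr rfl fun e he => ?_
  induction e using Sym2.ind with | _ u v => ?_
  let d : G.Dart := ⟨(u, v), mem_edgeFinset.1 he⟩
  change ∑ d' : G.Dart with d'.edge = d.edge, g d'.fst = g d.fst + g d.snd
  rw [d.edge_fiber, sum_pair d.symm_ne.symm]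
  rfl

theorem sum_edgeFinset_lift_add_eq_sum_degree_smul (g : V → M) :
    ∑ e ∈ G.edgeFinset, Sym2.lift ⟨fun u v => g u + g v, fun _ _ => add_comm _ _⟩ e =
      ∑ v, G.degree v • g v := by
  rw [← sum_darts_fst_eq_sum_edgeFinset, sum_darts_fst_eq_sum_degree_smul]

end SimpleGraph

theorem stmt1 (G : SimpleGraph V) [Fintype V] [DecidableRel G.Adj] :
    edgeSum G (fun x y => 1 / (x + y)) (fun a b => by (try dsimp only); rw [add_comm a b]) ≤
      (Fintype.card V : ℝ) / 4 := by
  let g : V → ℝ := fun v => (G.degree v : ℝ)⁻¹ / 4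
  calc edgeSum G (fun x y => 1 / (x + y)) _
      ≤ ∑ e ∈ G.edgeFinset, Sym2.lift ⟨fun u v => g u + g v, fun _ _ => add_comm _ _⟩ e := by
        refine sum_le_sum fun e he => ?_
        induction e using Sym2.ind with | _ u v => ?_
        have huv : G.Adj u v := SimpleGraph.mem_edgeFinset.1 he
        have hu : (0 : ℝ) < G.degree u := mod_cast huv.degree_pos_left
        have hv : (0 : ℝ) < G.degree v := mod_cast huv.degree_pos_right
        simpa only [Sym2.lift_mk, one_div, g, ← add_div] using inv_add_le_inv_add_inv_div_four hu hv
    _ = ∑ v, G.degree v • g v := G.sum_edgeFinset_lift_add_eq_sum_degree_smul g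
    _ ≤ ∑ _v : V, (4 : ℝ)⁻¹ := sum_le_sum fun v _ => by
        rw [nsmul_eq_mul, mul_div_assoc', div_eq_mul_inv]
        exact mul_le_of_le_one_left (by norm_num) mul_inv_le_one
    _ = (Fintype.card V : ℝ) / 4 := by rw [sum_const, card_univ, nsmul_eq_mul, div_eq_mul_inv]
end

section
/- If 0 ≤ x' < x ≤ y, then 2√(x'y)/(x'+y) < 2√(xy)/(x+y). -/
open Finset Real

variable {V : Type*}

/-! Squaring, the claim becomes `x' (x + y)² < x (x' + y)²`, and
`x (x' + y)² - x' (x + y)² = (x - x') (y² - x x')` is positive because `x x' < y²`. -/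

theorem mul_add_sq_lt_mul_add_sq {a b c : ℝ} (hab : a < b) (hc : a * b < c ^ 2) :
    a * (b + c) ^ 2 < b * (a + c) ^ 2 := by
  rw [← sub_pos, show b * (a + c) ^ 2 - a * (b + c) ^ 2 = (b - a) * (c ^ 2 - a * b) by ring]
  exact mul_pos (sub_pos.2 hab) (sub_pos.2 hc)

theorem sq_two_sqrt_mul_div_add {t y : ℝ} (ht : 0 ≤ t) (hy : 0 ≤ y) :
    (2 * √(t * y) / (t + y)) ^ 2 = 4 * (t * y) / (t + y) ^ 2 := by
  rw [div_pow, mul_pow, Real.sq_sqrt (mul_nonneg ht hy)]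
  norm_num

theorem strictMonoOn_two_sqrt_mul_div_add (y : ℝ) :
    StrictMonoOn (fun t => 2 * √(t * y) / (t + y)) (Set.Icc 0 y) := by
  rintro a ⟨ha, -⟩ b ⟨-, hby⟩ hab
  have hy : 0 < y := by linarith
  have hb : 0 ≤ b := by linarith
  have hab_lt_sq : a * b < y ^ 2 := by nlinarith
  have hsq : (2 * √(a * y) / (a + y)) ^ 2 < (2 * √(b * y) / (b + y)) ^ 2 := by
    rw [sq_two_sqrt_mul_div_add ha hy.le, sq_two_sqrt_mul_div_add hb hy.le,
      div_lt_div_iff₀ (pow_pos (by linarith) 2) (pow_pos (by linarith) 2)]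
    nlinarith [mul_add_sq_lt_mul_add_sq hab hab_lt_sq]
  exact lt_of_pow_lt_pow_left₀ 2 (by dsimp only; positivity) hsq

theorem stmt6_general (x' x y : ℝ) (h0 : 0 ≤ x') (h1 : x' < x) (h2 : x ≤ y) :
    2 * Real.sqrt (x' * y) / (x' + y) < 2 * Real.sqrt (x * y) / (x + y) :=
  strictMonoOn_two_sqrt_mul_div_add y ⟨h0, h1.le.trans h2⟩ ⟨h0.trans h1.le, h2⟩ h1

theorem stmt6 (x' x y : ℝ) (h0 : 0 ≤ x') (h1 : x' < x) (h2 : x ≤ y) (hy : 0 < y) :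
    2 * Real.sqrt (x' * y) / (x' + y) < 2 * Real.sqrt (x * y) / (x + y) :=
  stmt6_general x' x y h0 h1 h2
end

section
/- For every graph G with m edges, GA₁(G)² ≥ ((Δ+δ)²·M₂(G) + 4Δ³δ·m(m−1))/(Δ²(Δ+δ)²), with equality if and only if G is regular. -/
/-!
Write `GA₁ = ∑ₑ w(e)` with `w(uv) = 2√(d_u d_v)/(d_u + d_v)` and expand `GA₁²` into the diagonal
`∑ₑ w(e)²` plus `m(m - 1)` off-diagonal products. Since `d_u + d_v ≤ 2Δ`, every diagonal term
`4 d_u d_v/(d_u + d_v)²` is at least `d_u d_v/Δ²`, giving `M₂/Δ²`. Since `d_u/d_v` lies in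
`[δ/Δ, Δ/δ]`, every `w(e)` is at least `w` of an edge with end degrees `Δ, δ`, which bounds each
off-diagonal product by `4Δδ/(Δ + δ)²`. Equality forces `d_u + d_v = 2Δ` on every edge, and a
connected graph with an edge has no isolated vertex, so every degree is `Δ`.
-/

open Finset Real

variable {V : Type*}

namespace Finset

variable {ι : Type*}

lemma sq_sum_eq_sum_sq_add_sum_offDiag [DecidableEq ι] {R : Type*} [CommSemiring R]
    (s : Finset ι) (f : ι → R) :
    (∑ i ∈ s, f i) ^ 2 = ∑ i ∈ s, f i ^ 2 + ∑ p ∈ s.offDiag, f p.1 * f p.2 := by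
  rw [sq, sum_mul_sum, ← sum_product', ← diag_union_offDiag s,
    sum_union (disjoint_diag_offDiag s), sum_diag]
  simp only [sq]

variable {R : Type*} [Field R] [LinearOrder R] [IsStrictOrderedRing R] {s : Finset ι}

lemma card_mul_card_sub_one_mul_sq_le_sum_offDiag {f : ι → R} {c : R} (hc : 0 ≤ c)
    (hf : ∀ i ∈ s, c ≤ f i) :
    (#s : R) * (#s - 1) * c ^ 2 ≤ ∑ p ∈ s.offDiag, f p.1 * f p.2 := by
  have hcard : (#s.offDiag : R) = #s * (#s - 1) := by
    rw [offDiag_card, Nat.cast_sub (Nat.le_mul_self _)]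
    push_cast
    ring
  rw [← hcard, ← nsmul_eq_mul]
  refine card_nsmul_le_sum _ _ _ fun p hp => ?_
  obtain ⟨hp₁, hp₂, -⟩ := mem_offDiag.1 hp
  rw [sq]
  exact mul_le_mul (hf _ hp₁) (hf _ hp₂) hc (hc.trans (hf _ hp₁))

variable {f g : ι → R} {c : R}

lemma sum_add_card_mul_sq_le_sq_sum (hc : 0 ≤ c) (hg : ∀ i ∈ s, g i ≤ f i ^ 2)
    (hf : ∀ i ∈ s, c ≤ f i) :
    ∑ i ∈ s, g i + #s * (#s - 1) * c ^ 2 ≤ (∑ i ∈ s, f i) ^ 2 := by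
  classical
  rw [sq_sum_eq_sum_sq_add_sum_offDiag]
  exact add_le_add (sum_le_sum hg) (card_mul_card_sub_one_mul_sq_le_sum_offDiag hc hf)

lemma eq_sq_of_sum_add_card_mul_sq_eq_sq_sum (hc : 0 ≤ c) (hg : ∀ i ∈ s, g i ≤ f i ^ 2)
    (hf : ∀ i ∈ s, c ≤ f i)
    (heq : ∑ i ∈ s, g i + #s * (#s - 1) * c ^ 2 = (∑ i ∈ s, f i) ^ 2) :
    ∀ i ∈ s, g i = f i ^ 2 := by
  classical
  rw [sq_sum_eq_sum_sq_add_sum_offDiag] at heq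
  have hsum : ∑ i ∈ s, g i = ∑ i ∈ s, f i ^ 2 := by
    linarith [sum_le_sum hg, card_mul_card_sub_one_mul_sq_le_sum_offDiag hc hf]
  exact (sum_eq_sum_iff_of_le hg).1 hsum

end Finset

noncomputable def gaWeight (x y : ℝ) : ℝ := 2 * √(x * y) / (x + y)

lemma gaWeight_comm (x y : ℝ) : gaWeight x y = gaWeight y x := by
  rw [gaWeight, gaWeight, mul_comm x, add_comm x]

lemma gaWeight_nonneg {x y : ℝ} (hx : 0 ≤ x) (hy : 0 ≤ y) : 0 ≤ gaWeight x y := by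
  unfold gaWeight
  positivity

lemma gaWeight_sq {x y : ℝ} (hxy : 0 ≤ x * y) :
    gaWeight x y ^ 2 = 4 * (x * y) / (x + y) ^ 2 := by
  rw [gaWeight, div_pow, mul_pow, sq_sqrt hxy]
  norm_num

lemma gaWeight_self {x : ℝ} (hx : 0 < x) : gaWeight x x = 1 := by
  rw [gaWeight, sqrt_mul_self hx.le]
  field_simp
  ring

section GAWeightBounds

variable {x y D : ℝ}

lemma mul_div_sq_le_gaWeight_sq (hx : 0 < x) (hy : 0 < y) (hxD : x ≤ D) (hyD : y ≤ D) :
    x * y / D ^ 2 ≤ gaWeight x y ^ 2 := by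
  have hsum : (x + y) ^ 2 ≤ (2 * D) ^ 2 := pow_le_pow_left₀ (by positivity) (by linarith) 2
  rw [gaWeight_sq (by positivity), div_le_div_iff₀ (by nlinarith) (by positivity)]
  nlinarith [mul_le_mul_of_nonneg_left hsum (mul_pos hx hy).le]

lemma eq_of_mul_div_sq_eq_gaWeight_sq (hx : 0 < x) (hy : 0 < y) (hxD : x ≤ D) (hyD : y ≤ D)
    (h : x * y / D ^ 2 = gaWeight x y ^ 2) : x = D := by
  rw [gaWeight_sq (by positivity), div_eq_div_iff (by nlinarith) (by positivity)] at h
  have hsum : (x + y) ^ 2 = (2 * D) ^ 2 := by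
    apply mul_left_cancel₀ (mul_pos hx hy).ne'
    linear_combination h
  have := (pow_left_inj₀ (by positivity) (by linarith) two_ne_zero).1 hsum
  linarith

lemma gaWeight_le_gaWeight {d : ℝ} (hd : 0 < d) (hdx : d ≤ x) (hxD : x ≤ D) (hdy : d ≤ y)
    (hyD : y ≤ D) : gaWeight D d ≤ gaWeight x y := by
  have hx : 0 < x := hd.trans_le hdx
  have hy : 0 < y := hd.trans_le hdy
  have hD : 0 < D := hx.trans_le hxD
  refine (pow_le_pow_iff_left₀ (gaWeight_nonneg hD.le hd.le) (gaWeight_nonneg hx.le hy.le)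
    two_ne_zero).1 ?_
  rw [gaWeight_sq (by positivity), gaWeight_sq (by positivity),
    div_le_div_iff₀ (by positivity) (by positivity)]
  -- xy(D + d)² - Dd(x + y)² = (Dy - dx)(Dx - dy)
  nlinarith [mul_nonneg (by nlinarith : 0 ≤ D * y - d * x) (by nlinarith : 0 ≤ D * x - d * y)]

lemma div_sq_add_mul_gaWeight_sq {d : ℝ} (hD : 0 < D) (hd : 0 ≤ d) (M n : ℝ) :
    M / D ^ 2 + n * gaWeight D d ^ 2 =
      ((D + d) ^ 2 * M + 4 * D ^ 3 * d * n) / (D ^ 2 * (D + d) ^ 2) := by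
  rw [gaWeight_sq (by positivity)]
  field_simp

end GAWeightBounds

namespace SimpleGraph

variable {V : Type*} [Fintype V] (G : SimpleGraph V) [DecidableRel G.Adj]

noncomputable def edgeValue (f : ℝ → ℝ → ℝ) (hf : ∀ a b, f a b = f b a) : Sym2 V → ℝ :=
  Sym2.lift ⟨fun u v => f (G.degree u) (G.degree v), fun _ _ => hf _ _⟩

@[simp]
lemma edgeValue_mk (f : ℝ → ℝ → ℝ) (hf : ∀ a b, f a b = f b a) (u v : V) :
    G.edgeValue f hf s(u, v) = f (G.degree u) (G.degree v) :=
  rfl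

lemma GA1_eq_sum_edgeValue : GA1 G = ∑ e ∈ G.edgeFinset, G.edgeValue gaWeight gaWeight_comm e :=
  rfl

lemma M2_eq_sum_edgeValue : M2 G = ∑ e ∈ G.edgeFinset, G.edgeValue (· * ·) mul_comm e :=
  rfl

variable {G}

lemma cast_degree_pos (hδ : 0 < G.minDegree) (v : V) : (0 : ℝ) < G.degree v :=
  Nat.cast_pos.2 (hδ.trans_le (G.minDegree_le_degree v))

lemma cast_degree_le_maxDegree (v : V) : (G.degree v : ℝ) ≤ G.maxDegree :=
  Nat.cast_le.2 (G.degree_le_maxDegree v)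

lemma edgeValue_mul_div_maxDegree_sq_le (hδ : 0 < G.minDegree) (e : Sym2 V) :
    G.edgeValue (· * ·) mul_comm e / (G.maxDegree : ℝ) ^ 2 ≤
      G.edgeValue gaWeight gaWeight_comm e ^ 2 := by
  induction e using Sym2.ind with
  | _ u v =>
    exact mul_div_sq_le_gaWeight_sq (cast_degree_pos hδ u) (cast_degree_pos hδ v)
      (cast_degree_le_maxDegree u) (cast_degree_le_maxDegree v)

lemma gaWeight_maxDegree_minDegree_le_edgeValue (hδ : 0 < G.minDegree) (e : Sym2 V) :
    gaWeight G.maxDegree G.minDegree ≤ G.edgeValue gaWeight gaWeight_comm e := by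
  induction e using Sym2.ind with
  | _ u v =>
    exact gaWeight_le_gaWeight (Nat.cast_pos.2 hδ) (mod_cast G.minDegree_le_degree u)
      (cast_degree_le_maxDegree u) (mod_cast G.minDegree_le_degree v) (cast_degree_le_maxDegree v)

theorem M2_div_add_le_GA1_sq (hδ : 0 < G.minDegree) :
    M2 G / (G.maxDegree : ℝ) ^ 2 +
        #G.edgeFinset * (#G.edgeFinset - 1) * gaWeight G.maxDegree G.minDegree ^ 2 ≤
      GA1 G ^ 2 := by
  rw [M2_eq_sum_edgeValue, sum_div, GA1_eq_sum_edgeValue]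
  exact sum_add_card_mul_sq_le_sq_sum (gaWeight_nonneg (Nat.cast_nonneg _) (Nat.cast_nonneg _))
    (fun e _ => edgeValue_mul_div_maxDegree_sq_le hδ e)
    (fun e _ => gaWeight_maxDegree_minDegree_le_edgeValue hδ e)

theorem isRegularOfDegree_maxDegree_of_M2_div_add_eq_GA1_sq (hδ : 0 < G.minDegree)
    (h : M2 G / (G.maxDegree : ℝ) ^ 2 +
        #G.edgeFinset * (#G.edgeFinset - 1) * gaWeight G.maxDegree G.minDegree ^ 2 =
      GA1 G ^ 2) :
    G.IsRegularOfDegree G.maxDegree := by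
  rw [M2_eq_sum_edgeValue, sum_div, GA1_eq_sum_edgeValue] at h
  have hedge := eq_sq_of_sum_add_card_mul_sq_eq_sq_sum
    (gaWeight_nonneg (Nat.cast_nonneg _) (Nat.cast_nonneg _))
    (fun e _ => edgeValue_mul_div_maxDegree_sq_le hδ e)
    (fun e _ => gaWeight_maxDegree_minDegree_le_edgeValue hδ e) h
  intro v
  obtain ⟨w, hvw⟩ := (G.degree_pos_iff_exists_adj v).1 (hδ.trans_le (G.minDegree_le_degree v))
  exact_mod_cast eq_of_mul_div_sq_eq_gaWeight_sq (cast_degree_pos hδ v) (cast_degree_pos hδ w)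
    (cast_degree_le_maxDegree v) (cast_degree_le_maxDegree w)
    (hedge s(v, w) (mem_edgeFinset.2 hvw))

lemma IsRegularOfDegree.GA1_eq {k : ℕ} (hk : G.IsRegularOfDegree k) (hk₀ : 0 < k) :
    GA1 G = #G.edgeFinset := by
  have hedge (e : Sym2 V) : G.edgeValue gaWeight gaWeight_comm e = 1 := by
    induction e using Sym2.ind with
    | _ u v => rw [edgeValue_mk, hk u, hk v, gaWeight_self (Nat.cast_pos.2 hk₀)]
  simp [GA1_eq_sum_edgeValue, hedge]

lemma IsRegularOfDegree.M2_eq {k : ℕ} (hk : G.IsRegularOfDegree k) :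
    M2 G = k ^ 2 * #G.edgeFinset := by
  have hedge (e : Sym2 V) : G.edgeValue (· * ·) mul_comm e = k ^ 2 := by
    induction e using Sym2.ind with
    | _ u v => rw [edgeValue_mk, hk u, hk v, sq]
  simp [M2_eq_sum_edgeValue, hedge, mul_comm]

end SimpleGraph

open SimpleGraph

theorem stmt7 (G : SimpleGraph V) [Fintype V] [DecidableRel G.Adj]
    (hc : G.Connected) (hm : G.edgeFinset.Nonempty) :
    (((G.maxDegree : ℝ) + G.minDegree) ^ 2 * M2 G +
        4 * (G.maxDegree : ℝ) ^ 3 * (G.minDegree : ℝ) *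
          ((G.edgeFinset.card : ℝ) * ((G.edgeFinset.card : ℝ) - 1))) /
      ((G.maxDegree : ℝ) ^ 2 * ((G.maxDegree : ℝ) + G.minDegree) ^ 2) ≤ (GA1 G) ^ 2 ∧
    ((GA1 G) ^ 2 =
      (((G.maxDegree : ℝ) + G.minDegree) ^ 2 * M2 G +
          4 * (G.maxDegree : ℝ) ^ 3 * (G.minDegree : ℝ) *
            ((G.edgeFinset.card : ℝ) * ((G.edgeFinset.card : ℝ) - 1))) /
        ((G.maxDegree : ℝ) ^ 2 * ((G.maxDegree : ℝ) + G.minDegree) ^ 2) ↔ GraphRegular G) := by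
  obtain ⟨_, _, huv⟩ := ne_bot_iff_exists_adj.1 (edgeFinset_nonempty.1 hm)
  have := huv.nontrivial
  have hδ : 0 < G.minDegree := hc.preconnected.minDegree_pos_of_nontrivial
  rw [← div_sq_add_mul_gaWeight_sq (Nat.cast_pos.2 (hδ.trans_le G.minDegree_le_maxDegree))
    (Nat.cast_nonneg _)]
  refine ⟨M2_div_add_le_GA1_sq hδ,
    fun h => ⟨_, isRegularOfDegree_maxDegree_of_M2_div_add_eq_GA1_sq hδ h.symm⟩, ?_⟩
  rintro ⟨k, hk⟩
  have hk₀ : 0 < k := hk.minDegree_eq ▸ hδ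
  rw [hk.maxDegree_eq, hk.minDegree_eq, hk.GA1_eq hk₀, hk.M2_eq, gaWeight_self (by positivity)]
  field_simp
  ring
end

section
/- For any graph G, δ·R(G) ≤ GA₁(G) ≤ Δ·R(G), with each equality if and only if G is regular. -/
open Finset Real

variable {V : Type*}

/-!
On an edge `uv` with degrees `a = d_u`, `b = d_v`, the GA₁-term is the Randić term `1/√(ab)`
multiplied by the harmonic mean `2ab/(a+b)`, which lies between `min a b ≥ δ` and `max a b ≤ Δ`
and equals `δ` (resp. `Δ`) only if `a = b = δ` (resp. `Δ`). Summing over edges gives both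
inequalities, and equality forces every vertex lying on an edge to have degree `δ` (resp. `Δ`).
In a connected graph every vertex lies on an edge, unless the graph is a single vertex.
-/

section EdgeTerms

variable {a b d : ℝ}

lemma mul_one_div_sqrt_le_two_mul_sqrt_div_add (ha : 0 < a) (hb : 0 < b) (hda : d ≤ a)
    (hdb : d ≤ b) : d * (1 / √(a * b)) ≤ 2 * √(a * b) / (a + b) := by
  have hs : √(a * b) * √(a * b) = a * b := Real.mul_self_sqrt (by positivity)
  rw [mul_one_div, div_le_div_iff₀ (by positivity) (by positivity)]
  nlinarith [mul_nonneg ha.le (sub_nonneg.2 hdb), mul_nonneg hb.le (sub_nonneg.2 hda)]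

lemma mul_one_div_sqrt_eq_two_mul_sqrt_div_add_iff (ha : 0 < a) (hb : 0 < b) (hda : d ≤ a)
    (hdb : d ≤ b) : d * (1 / √(a * b)) = 2 * √(a * b) / (a + b) ↔ a = d ∧ b = d := by
  have hs : √(a * b) * √(a * b) = a * b := Real.mul_self_sqrt (by positivity)
  rw [mul_one_div, div_eq_div_iff (by positivity) (by positivity)]
  refine ⟨fun h => ?_, fun ⟨had, hbd⟩ => by subst had hbd; nlinarith⟩
  constructor <;>
    nlinarith [mul_nonneg ha.le (sub_nonneg.2 hdb), mul_nonneg hb.le (sub_nonneg.2 hda)]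

lemma two_mul_sqrt_div_add_le_mul_one_div_sqrt (ha : 0 < a) (hb : 0 < b) (had : a ≤ d)
    (hbd : b ≤ d) : 2 * √(a * b) / (a + b) ≤ d * (1 / √(a * b)) := by
  have hs : √(a * b) * √(a * b) = a * b := Real.mul_self_sqrt (by positivity)
  rw [mul_one_div, div_le_div_iff₀ (by positivity) (by positivity)]
  nlinarith [mul_nonneg ha.le (sub_nonneg.2 hbd), mul_nonneg hb.le (sub_nonneg.2 had)]

lemma two_mul_sqrt_div_add_eq_mul_one_div_sqrt_iff (ha : 0 < a) (hb : 0 < b) (had : a ≤ d)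
    (hbd : b ≤ d) : 2 * √(a * b) / (a + b) = d * (1 / √(a * b)) ↔ a = d ∧ b = d := by
  have hs : √(a * b) * √(a * b) = a * b := Real.mul_self_sqrt (by positivity)
  rw [mul_one_div, div_eq_div_iff (by positivity) (by positivity)]
  refine ⟨fun h => ?_, fun ⟨had, hbd⟩ => by subst had hbd; nlinarith⟩
  constructor <;>
    nlinarith [mul_nonneg ha.le (sub_nonneg.2 hbd), mul_nonneg hb.le (sub_nonneg.2 had)]

end EdgeTerms

section EdgeSum

variable {G : SimpleGraph V} [Fintype V] [DecidableRel G.Adj]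

lemma forall_mem_edgeFinset_iff {P : Sym2 V → Prop} :
    (∀ e ∈ G.edgeFinset, P e) ↔ ∀ u v, G.Adj u v → P s(u, v) := by
  refine ⟨fun h u v huv => h s(u, v) (G.mem_edgeFinset.mpr huv), fun h e he => ?_⟩
  induction e using Sym2.ind with
  | _ u v => exact h u v (G.mem_edgeFinset.mp he)

variable {f g : ℝ → ℝ → ℝ} {hf : ∀ a b, f a b = f b a} {hg : ∀ a b, g a b = g b a}

lemma mul_edgeSum (c : ℝ) :
    c * edgeSum G f hf = edgeSum G (fun x y => c * f x y) (fun a b => by rw [hf]) := by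
  rw [edgeSum, edgeSum, mul_sum]
  refine sum_congr rfl fun e _ => ?_
  induction e using Sym2.ind with
  | _ u v => rfl

lemma edgeSum_le_edgeSum
    (h : ∀ u v, G.Adj u v → f (G.degree u) (G.degree v) ≤ g (G.degree u) (G.degree v)) :
    edgeSum G f hf ≤ edgeSum G g hg :=
  sum_le_sum (forall_mem_edgeFinset_iff.mpr h)

lemma edgeSum_eq_edgeSum_iff_of_le
    (h : ∀ u v, G.Adj u v → f (G.degree u) (G.degree v) ≤ g (G.degree u) (G.degree v)) :
    edgeSum G f hf = edgeSum G g hg ↔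
      ∀ u v, G.Adj u v → f (G.degree u) (G.degree v) = g (G.degree u) (G.degree v) :=
  (sum_eq_sum_iff_of_le (forall_mem_edgeFinset_iff.mpr h)).trans forall_mem_edgeFinset_iff

end EdgeSum

lemma SimpleGraph.Connected.graphRegular_of_forall_adj {G : SimpleGraph V} [Fintype V]
    [DecidableRel G.Adj] (hc : G.Connected) {d : ℕ} (h : ∀ u v, G.Adj u v → G.degree u = d) :
    GraphRegular G := by
  cases subsingleton_or_nontrivial V with
  | inl _ =>
    obtain ⟨v₀⟩ := hc.nonempty
    exact ⟨G.degree v₀, fun v => by rw [Subsingleton.elim v v₀]⟩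
  | inr _ =>
    refine ⟨d, fun v => ?_⟩
    obtain ⟨w, hvw⟩ :=
      (G.degree_pos_iff_exists_adj v).mp (hc.preconnected.degree_pos_of_nontrivial v)
    exact h v w hvw

section GA1Randic

variable {G : SimpleGraph V} [Fintype V] [DecidableRel G.Adj] {d : ℝ}

lemma mul_randic_le_GA1 (hd : ∀ v, d ≤ G.degree v) : d * randic G ≤ GA1 G := by
  rw [randic, mul_edgeSum, GA1]
  exact edgeSum_le_edgeSum fun u v huv => mul_one_div_sqrt_le_two_mul_sqrt_div_add
    (Nat.cast_pos.2 huv.degree_pos_left) (Nat.cast_pos.2 huv.degree_pos_right) (hd u) (hd v)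

lemma degree_eq_of_GA1_eq_mul_randic_of_le_degree (hd : ∀ v, d ≤ G.degree v)
    (h : GA1 G = d * randic G) {u v : V} (huv : G.Adj u v) : G.degree u = d := by
  rw [randic, mul_edgeSum, GA1, eq_comm, edgeSum_eq_edgeSum_iff_of_le fun u v huv =>
    mul_one_div_sqrt_le_two_mul_sqrt_div_add (Nat.cast_pos.2 huv.degree_pos_left)
      (Nat.cast_pos.2 huv.degree_pos_right) (hd u) (hd v)] at h
  exact ((mul_one_div_sqrt_eq_two_mul_sqrt_div_add_iff (Nat.cast_pos.2 huv.degree_pos_left)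
    (Nat.cast_pos.2 huv.degree_pos_right) (hd u) (hd v)).mp (h u v huv)).1

lemma GA1_le_mul_randic (hd : ∀ v, G.degree v ≤ d) : GA1 G ≤ d * randic G := by
  rw [randic, mul_edgeSum, GA1]
  exact edgeSum_le_edgeSum fun u v huv => two_mul_sqrt_div_add_le_mul_one_div_sqrt
    (Nat.cast_pos.2 huv.degree_pos_left) (Nat.cast_pos.2 huv.degree_pos_right) (hd u) (hd v)

lemma degree_eq_of_GA1_eq_mul_randic_of_degree_le (hd : ∀ v, G.degree v ≤ d)
    (h : GA1 G = d * randic G) {u v : V} (huv : G.Adj u v) : G.degree u = d := by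
  rw [randic, mul_edgeSum, GA1, edgeSum_eq_edgeSum_iff_of_le fun u v huv =>
    two_mul_sqrt_div_add_le_mul_one_div_sqrt (Nat.cast_pos.2 huv.degree_pos_left)
      (Nat.cast_pos.2 huv.degree_pos_right) (hd u) (hd v)] at h
  exact ((two_mul_sqrt_div_add_eq_mul_one_div_sqrt_iff (Nat.cast_pos.2 huv.degree_pos_left)
    (Nat.cast_pos.2 huv.degree_pos_right) (hd u) (hd v)).mp (h u v huv)).1

lemma SimpleGraph.IsRegularOfDegree.GA1_eq_mul_randic {k : ℕ} (hk : G.IsRegularOfDegree k) :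
    GA1 G = k * randic G := by
  rw [randic, mul_edgeSum, GA1, edgeSum, edgeSum]
  refine sum_congr rfl fun e _ => ?_
  induction e using Sym2.ind with
  | _ u v =>
    simp only [Sym2.lift_mk, hk.degree_eq, Real.sqrt_mul_self (Nat.cast_nonneg k)]
    rcases eq_or_ne (k : ℝ) 0 with hk0 | hk0
    · simp [hk0]
    · field_simp
      ring

end GA1Randic

theorem stmt13_general (G : SimpleGraph V) [Fintype V] [DecidableRel G.Adj]
    (hc : G.Connected) :
    (G.minDegree : ℝ) * randic G ≤ GA1 G ∧ GA1 G ≤ (G.maxDegree : ℝ) * randic G ∧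
    (GA1 G = (G.minDegree : ℝ) * randic G ↔ GraphRegular G) ∧
    (GA1 G = (G.maxDegree : ℝ) * randic G ↔ GraphRegular G) := by
  have : Nonempty V := hc.nonempty
  have hδ (v : V) : (G.minDegree : ℝ) ≤ G.degree v := Nat.cast_le.2 (G.minDegree_le_degree v)
  have hΔ (v : V) : (G.degree v : ℝ) ≤ G.maxDegree := Nat.cast_le.2 (G.degree_le_maxDegree v)
  refine ⟨mul_randic_le_GA1 hδ, GA1_le_mul_randic hΔ,
    ⟨fun h => ?_, ?_⟩, ⟨fun h => ?_, ?_⟩⟩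
  · exact hc.graphRegular_of_forall_adj fun u v huv =>
      Nat.cast_injective (degree_eq_of_GA1_eq_mul_randic_of_le_degree hδ h huv)
  · rintro ⟨k, hk⟩
    rw [hk.minDegree_eq, hk.GA1_eq_mul_randic]
  · exact hc.graphRegular_of_forall_adj fun u v huv =>
      Nat.cast_injective (degree_eq_of_GA1_eq_mul_randic_of_degree_le hΔ h huv)
  · rintro ⟨k, hk⟩
    rw [hk.maxDegree_eq, hk.GA1_eq_mul_randic]

theorem stmt13 (G : SimpleGraph V) [Fintype V] [DecidableRel G.Adj]
    (hc : G.Connected) (hm : G.edgeFinset.Nonempty) :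
    (G.minDegree : ℝ) * randic G ≤ GA1 G ∧ GA1 G ≤ (G.maxDegree : ℝ) * randic G ∧
    (GA1 G = (G.minDegree : ℝ) * randic G ↔ GraphRegular G) ∧
    (GA1 G = (G.maxDegree : ℝ) * randic G ↔ GraphRegular G) :=
  stmt13_general G hc
end

section
/- For any graph G and any α > 0, GA₁(G) ≤ √(R_α(G)·R_{−α}(G)); moreover if G is regular then equality holds, and equality implies G is regular. Also GA₁(G) ≥ k_α·√(R_α(G)·R_{−α}(G)), where k_α = 2Δ^{1/2}δ^{3/2}/(Δ²+δ²) if 0 < α ≤ 1 and k_α = 2Δ^{α−1/2}δ^{α+1/2}/(Δ^{2α}+δ^{2α}) if α ≥ 1. -/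
open Finset Real

variable {V : Type*}

/-!
Every summand `2√(d_u d_v)/(d_u + d_v)` of `GA₁` is at most `1`, so `GA₁ ≤ m`, the number of edges,
while Cauchy–Schwarz applied to the weights `(d_u d_v)^α` and their inverses gives
`m² ≤ R_α R_{-α}`. Equality forces every summand to be `1`, i.e. adjacent vertices have equal
degrees, and connectedness spreads this to the whole graph.

For the lower bounds, each summand is at least `2√(δΔ)/(δ + Δ)`, and the Pólya–Szegő inequality for
weights in `[δ^{2α}, Δ^{2α}]` gives `2 δ^α Δ^α √(R_α R_{-α}) ≤ m (δ^{2α} + Δ^{2α})`. Both constants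
`k_α` are at most the product of these two ratios.
-/

noncomputable def gaTerm (x y : ℝ) : ℝ := 2 * √(x * y) / (x + y)

lemma two_mul_sqrt_mul_le_add {x y : ℝ} (hx : 0 ≤ x) (hy : 0 ≤ y) : 2 * √(x * y) ≤ x + y :=
  two_mul_le_add_of_sq_le_mul hx hy (sq_sqrt (mul_nonneg hx hy)).le

lemma gaTerm_nonneg {x y : ℝ} (hx : 0 ≤ x) (hy : 0 ≤ y) : 0 ≤ gaTerm x y := by
  unfold gaTerm; positivity

lemma gaTerm_le_one {x y : ℝ} (hx : 0 ≤ x) (hy : 0 ≤ y) : gaTerm x y ≤ 1 :=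
  div_le_one_of_le₀ (two_mul_sqrt_mul_le_add hx hy) (add_nonneg hx hy)

lemma eq_of_gaTerm_eq_one {x y : ℝ} (hx : 0 ≤ x) (hy : 0 ≤ y) (h : gaTerm x y = 1) : x = y := by
  have hxy : x + y ≠ 0 := by rintro hxy; simp [gaTerm, hxy] at h
  rw [gaTerm, div_eq_one_iff_eq hxy, sqrt_mul hx] at h
  have hsq : (√x - √y) ^ 2 = 0 := by nlinarith [sq_sqrt hx, sq_sqrt hy]
  rw [← sq_sqrt hx, ← sq_sqrt hy, sub_eq_zero.1 (pow_eq_zero_iff two_ne_zero |>.1 hsq)]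

lemma gaTerm_self {x : ℝ} (hx : 0 < x) : gaTerm x x = 1 := by
  rw [gaTerm, sqrt_mul_self hx.le, div_eq_one_iff_eq (by positivity), two_mul]

lemma gaTerm_sq_sq {x y : ℝ} (hx : 0 ≤ x) (hy : 0 ≤ y) :
    gaTerm (x ^ 2) (y ^ 2) = 2 * x * y / (x ^ 2 + y ^ 2) := by
  rw [gaTerm, ← mul_pow, sqrt_sq (mul_nonneg hx hy), mul_assoc]

/-- The hypotheses say that `d / c` lies between `a / b` and `b / a`: `gaTerm x y` only depends on
`y / x`, and decreases as that ratio moves away from `1`. -/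
lemma gaTerm_le_gaTerm {a b c d : ℝ} (ha : 0 < a) (hb : 0 ≤ b) (hc : 0 < c) (hd : 0 ≤ d)
    (hac : a * c ≤ b * d) (had : a * d ≤ b * c) : gaTerm a b ≤ gaTerm c d := by
  have key : √(a * b) * (c + d) ≤ √(c * d) * (a + b) := by
    rw [← sqrt_sq (by positivity : 0 ≤ c + d), ← sqrt_sq (by positivity : 0 ≤ a + b),
      ← sqrt_mul (by positivity), ← sqrt_mul (by positivity)]
    refine sqrt_le_sqrt ?_
    nlinarith [mul_nonneg (sub_nonneg.2 hac) (sub_nonneg.2 had)]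
  rw [gaTerm, gaTerm, div_le_div_iff₀ (by positivity) (by positivity)]
  linarith

lemma sqrt_div_sqrt_le_gaTerm {d D : ℝ} (hd : 0 ≤ d) (hdD : d ≤ D) : √d / √D ≤ gaTerm d D := by
  rcases (hd.trans hdD).eq_or_lt with hD | hD
  · obtain rfl : d = 0 := by linarith
    simp [← hD, gaTerm]
  calc √d / √D = √d * √D / D := by
        rw [div_eq_div_iff (sqrt_pos.2 hD).ne' hD.ne', mul_assoc, mul_self_sqrt hD.le]
    _ ≤ √d * √D / ((d + D) / 2) :=
        div_le_div_of_nonneg_left (by positivity) (by positivity) (by linarith)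
    _ = gaTerm d D := by rw [gaTerm, sqrt_mul hd, div_div_eq_mul_div, mul_comm 2]

lemma add_mul_inv_le_add {A B p : ℝ} (hA : 0 < A) (hAp : A ≤ p) (hpB : p ≤ B) :
    p + A * B * p⁻¹ ≤ A + B := by
  have hp : 0 < p := hA.trans_le hAp
  have : A + B - (p + A * B * p⁻¹) = (p - A) * (B - p) / p := by field_simp; ring
  nlinarith [div_nonneg (mul_nonneg (sub_nonneg.2 hAp) (sub_nonneg.2 hpB)) hp.le]

namespace Finset

variable {ι : Type*} {s : Finset ι} {p : ι → ℝ}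

lemma card_sq_le_sum_mul_sum_inv (hp : ∀ i ∈ s, 0 < p i) :
    (#s : ℝ) ^ 2 ≤ (∑ i ∈ s, p i) * ∑ i ∈ s, (p i)⁻¹ := by
  simpa using sum_sq_le_sum_mul_sum_of_sq_le_mul s (r := fun _ => (1 : ℝ))
    (fun i hi => (hp i hi).le) (fun i hi => (inv_pos.2 (hp i hi)).le)
    (fun i hi => by simp [mul_inv_cancel₀ (hp i hi).ne'])

/-- The Pólya–Szegő (Kantorovich) reverse Cauchy–Schwarz inequality. -/
lemma gaTerm_mul_sqrt_sum_mul_sum_inv_le {A B : ℝ} (hA : 0 < A) (hAB : A ≤ B)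
    (hp : ∀ i ∈ s, A ≤ p i ∧ p i ≤ B) :
    gaTerm A B * √((∑ i ∈ s, p i) * ∑ i ∈ s, (p i)⁻¹) ≤ #s := by
  set S := ∑ i ∈ s, p i
  set T := ∑ i ∈ s, (p i)⁻¹
  have hS : 0 ≤ S := sum_nonneg fun i hi => hA.le.trans (hp i hi).1
  have hT : 0 ≤ T := sum_nonneg fun i hi => inv_nonneg.2 (hA.le.trans (hp i hi).1)
  have hB : 0 < B := hA.trans_le hAB
  have hsum : S + A * B * T ≤ #s * (A + B) := by
    rw [mul_sum, ← sum_add_distrib, ← nsmul_eq_mul]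
    exact sum_le_card_nsmul _ _ _ fun i hi => add_mul_inv_le_add hA (hp i hi).1 (hp i hi).2
  -- AM–GM applied to `S` and `A B T`
  have hamgm : 2 * √(A * B) * √(S * T) ≤ S + A * B * T := by
    rw [mul_assoc, ← sqrt_mul (by positivity), show A * B * (S * T) = S * (A * B * T) by ring]
    exact two_mul_sqrt_mul_le_add hS (by positivity)
  rw [gaTerm, div_mul_eq_mul_div, div_le_iff₀ (by positivity)]
  linarith

end Finset

lemma two_mul_rpow_sub_mul_rpow_add_div_le {d D : ℝ} (hd : 0 < d) (hdD : d ≤ D) (α : ℝ) :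
    2 * D ^ (α - 1 / 2) * d ^ (α + 1 / 2) / (D ^ (2 * α) + d ^ (2 * α)) ≤
      gaTerm d D * gaTerm ((d ^ α) ^ 2) ((D ^ α) ^ 2) := by
  have hD : 0 < D := hd.trans_le hdD
  have hsplit : 2 * D ^ (α - 1 / 2) * d ^ (α + 1 / 2) / (D ^ (2 * α) + d ^ (2 * α)) =
      √d / √D * gaTerm ((d ^ α) ^ 2) ((D ^ α) ^ 2) := by
    rw [gaTerm_sq_sq (by positivity) (by positivity), rpow_sub hD, rpow_add hd, ← sqrt_eq_rpow,
      ← sqrt_eq_rpow, mul_comm 2 α, rpow_mul hD.le, rpow_mul hd.le, rpow_two, rpow_two]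
    field_simp
    ring
  rw [hsplit]
  exact mul_le_mul_of_nonneg_right (sqrt_div_sqrt_le_gaTerm hd.le hdD)
    (gaTerm_nonneg (by positivity) (by positivity))

lemma two_mul_sqrt_mul_rpow_three_halves_div_le {d D α : ℝ} (hd : 0 < d) (hdD : d ≤ D)
    (hα₀ : 0 ≤ α) (hα₁ : α ≤ 1) :
    2 * D ^ ((1 : ℝ) / 2) * d ^ ((3 : ℝ) / 2) / (D ^ 2 + d ^ 2) ≤
      gaTerm d D * gaTerm ((d ^ α) ^ 2) ((D ^ α) ^ 2) := by
  have hD : 0 < D := hd.trans_le hdD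
  have hsplit : 2 * D ^ ((1 : ℝ) / 2) * d ^ ((3 : ℝ) / 2) / (D ^ 2 + d ^ 2) =
      √d / √D * gaTerm (d ^ 2) (D ^ 2) := by
    rw [gaTerm_sq_sq hd.le hD.le, show (3 : ℝ) / 2 = 1 + 1 / 2 by norm_num, rpow_add hd, rpow_one,
      ← sqrt_eq_rpow, ← sqrt_eq_rpow]
    field_simp
    rw [sq_sqrt hD.le]
    ring
  -- `(D / d) ^ α ≤ D / d` because `D / d ≥ 1` and `α ≤ 1`
  have hratio : d * D ^ α ≤ D * d ^ α := by
    have h := rpow_le_rpow_of_exponent_le ((one_le_div hd).2 hdD) hα₁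
    rwa [rpow_one, div_rpow hD.le hd.le, div_le_div_iff₀ (rpow_pos_of_pos hd α) hd,
      mul_comm] at h
  have hpow : d ^ α ≤ D ^ α := rpow_le_rpow hd.le hdD hα₀
  rw [hsplit]
  refine mul_le_mul (sqrt_div_sqrt_le_gaTerm hd.le hdD) (gaTerm_le_gaTerm (by positivity)
    (by positivity) (by positivity) (by positivity) (by gcongr) ?_)
    (gaTerm_nonneg (by positivity) (by positivity)) (gaTerm_nonneg hd.le hD.le)
  rw [← mul_pow, ← mul_pow]
  exact pow_le_pow_left₀ (by positivity) hratio 2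

namespace SimpleGraph

variable (G : SimpleGraph V)

lemma Reachable.eq_of_forall_adj {α : Type*} {f : V → α} (h : ∀ u v, G.Adj u v → f u = f v)
    {u v : V} (huv : G.Reachable u v) : f u = f v := by
  obtain ⟨p⟩ := huv
  induction p with
  | nil => rfl
  | cons hadj _ ih => exact (h _ _ hadj).trans ih

variable [Fintype V] [DecidableRel G.Adj]

lemma forall_mem_edgeFinset_iff {P : Sym2 V → Prop} :
    (∀ e ∈ G.edgeFinset, P e) ↔ ∀ u v, G.Adj u v → P s(u, v) := by
  simp [Sym2.forall]

section EdgeSum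

variable {G} {f : ℝ → ℝ → ℝ} {hf : ∀ a b, f a b = f b a} {c : ℝ}

lemma card_mul_le_edgeSum (h : ∀ u v, G.Adj u v → c ≤ f (G.degree u) (G.degree v)) :
    #G.edgeFinset * c ≤ edgeSum G f hf := by
  rw [← nsmul_eq_mul]
  exact card_nsmul_le_sum _ _ _ ((forall_mem_edgeFinset_iff G).2 h)

lemma edgeSum_le_card_mul (h : ∀ u v, G.Adj u v → f (G.degree u) (G.degree v) ≤ c) :
    edgeSum G f hf ≤ #G.edgeFinset * c := by
  rw [← nsmul_eq_mul]
  exact sum_le_card_nsmul _ _ _ ((forall_mem_edgeFinset_iff G).2 h)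

lemma edgeSum_eq_card_mul_iff (h : ∀ u v, G.Adj u v → f (G.degree u) (G.degree v) ≤ c) :
    edgeSum G f hf = #G.edgeFinset * c ↔ ∀ u v, G.Adj u v → f (G.degree u) (G.degree v) = c := by
  rw [← nsmul_eq_mul, ← sum_const, edgeSum,
    sum_eq_sum_iff_of_le ((forall_mem_edgeFinset_iff G).2 h)]
  exact forall_mem_edgeFinset_iff G

end EdgeSum

lemma degree_pos_of_adj {u v : V} (huv : G.Adj u v) : 0 < G.degree u :=
  (G.degree_pos_iff_exists_adj u).2 ⟨v, huv⟩

lemma minDegree_le_degree_le_maxDegree (v : V) :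
    (G.minDegree : ℝ) ≤ G.degree v ∧ (G.degree v : ℝ) ≤ G.maxDegree :=
  ⟨Nat.cast_le.2 (G.minDegree_le_degree v), Nat.cast_le.2 (G.degree_le_maxDegree v)⟩

lemma GA1_nonneg : 0 ≤ GA1 G :=
  (mul_zero _).symm.trans_le
    (card_mul_le_edgeSum fun _ _ _ => gaTerm_nonneg (Nat.cast_nonneg _) (Nat.cast_nonneg _))

lemma GA1_le_card : GA1 G ≤ #G.edgeFinset :=
  (edgeSum_le_card_mul fun _ _ _ => gaTerm_le_one (Nat.cast_nonneg _) (Nat.cast_nonneg _)).trans_eq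
    (mul_one _)

lemma GA1_eq_card_iff :
    GA1 G = #G.edgeFinset ↔ ∀ u v, G.Adj u v → G.degree u = G.degree v := by
  have key : GA1 G = #G.edgeFinset * 1 ↔ _ :=
    edgeSum_eq_card_mul_iff fun _ _ _ => gaTerm_le_one (Nat.cast_nonneg _) (Nat.cast_nonneg _)
  rw [mul_one] at key
  refine key.trans (forall₃_congr fun u v huv => ⟨fun h => Nat.cast_injective
    (eq_of_gaTerm_eq_one (Nat.cast_nonneg _) (Nat.cast_nonneg _) h), fun h => ?_⟩)
  rw [h]
  exact gaTerm_self (Nat.cast_pos.2 (h ▸ G.degree_pos_of_adj huv))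

lemma graphRegular_of_forall_adj_degree_eq (hc : G.Connected)
    (h : ∀ u v, G.Adj u v → G.degree u = G.degree v) : GraphRegular G := by
  obtain ⟨v₀⟩ := hc.nonempty
  exact ⟨G.degree v₀, fun v => Reachable.eq_of_forall_adj G h (hc.preconnected v v₀)⟩

lemma card_mul_gaTerm_le_GA1 (hδ : 0 < G.minDegree) :
    #G.edgeFinset * gaTerm G.minDegree G.maxDegree ≤ GA1 G := by
  refine card_mul_le_edgeSum fun u v huv => ?_
  have hu := G.minDegree_le_degree_le_maxDegree u
  have hv := G.minDegree_le_degree_le_maxDegree v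
  exact gaTerm_le_gaTerm (Nat.cast_pos.2 hδ) (Nat.cast_nonneg _)
    (Nat.cast_pos.2 (G.degree_pos_of_adj huv)) (Nat.cast_nonneg _)
    ((mul_le_mul hv.1 hu.2 (Nat.cast_nonneg _) (Nat.cast_nonneg _)).trans_eq (mul_comm _ _))
    ((mul_le_mul hu.1 hv.2 (Nat.cast_nonneg _) (Nat.cast_nonneg _)).trans_eq (mul_comm _ _))

noncomputable def randicWeight (α : ℝ) : Sym2 V → ℝ :=
  Sym2.lift ⟨fun u v => ((G.degree u : ℝ) * G.degree v) ^ α, fun _ _ => by simp only [mul_comm]⟩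

lemma genRandic_eq_sum (α : ℝ) : genRandic G α = ∑ e ∈ G.edgeFinset, G.randicWeight α e := rfl

lemma randicWeight_neg (α : ℝ) (e : Sym2 V) : G.randicWeight (-α) e = (G.randicWeight α e)⁻¹ := by
  induction e using Sym2.ind with
  | _ u v => exact rpow_neg (by positivity) α

lemma randicWeight_pos {α : ℝ} {e : Sym2 V} (he : e ∈ G.edgeFinset) : 0 < G.randicWeight α e := by
  induction e using Sym2.ind with
  | _ u v =>
    have huv : G.Adj u v := G.mem_edgeFinset.1 he
    exact rpow_pos_of_pos (mul_pos (Nat.cast_pos.2 (G.degree_pos_of_adj huv))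
      (Nat.cast_pos.2 (G.degree_pos_of_adj huv.symm))) α

lemma randicWeight_mem_Icc {α : ℝ} (hα : 0 ≤ α) (e : Sym2 V) :
    ((G.minDegree : ℝ) ^ α) ^ 2 ≤ G.randicWeight α e ∧
      G.randicWeight α e ≤ ((G.maxDegree : ℝ) ^ α) ^ 2 := by
  induction e using Sym2.ind with
  | _ u v =>
    simp only [randicWeight, Sym2.lift_mk, sq, mul_rpow (Nat.cast_nonneg _) (Nat.cast_nonneg _)]
    constructor <;> gcongr <;> first | apply minDegree_le_degree | apply degree_le_maxDegree

lemma card_le_sqrt_genRandic_mul (α : ℝ) :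
    #G.edgeFinset ≤ √(genRandic G α * genRandic G (-α)) := by
  simp only [genRandic_eq_sum, randicWeight_neg]
  exact le_sqrt_of_sq_le (card_sq_le_sum_mul_sum_inv fun e he => G.randicWeight_pos he)

lemma genRandic_mul_genRandic_neg_of_isRegularOfDegree {k : ℕ} (hk : G.IsRegularOfDegree k)
    (α : ℝ) : genRandic G α * genRandic G (-α) = #G.edgeFinset ^ 2 := by
  have hconst : ∀ e, G.randicWeight α e = ((k : ℝ) * k) ^ α := fun e => by
    induction e using Sym2.ind with
    | _ u v => simp [randicWeight, hk u, hk v]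
  rw [genRandic_eq_sum, genRandic_eq_sum, sum_mul_sum, sq]
  calc ∑ e ∈ G.edgeFinset, ∑ e' ∈ G.edgeFinset, G.randicWeight α e * G.randicWeight (-α) e'
      = ∑ e ∈ G.edgeFinset, ∑ e' ∈ G.edgeFinset, (1 : ℝ) :=
        sum_congr rfl fun e _ => sum_congr rfl fun e' he' => by
          rw [randicWeight_neg, hconst e, ← hconst e', mul_inv_cancel₀ (G.randicWeight_pos he').ne']
    _ = #G.edgeFinset * #G.edgeFinset := by simp

lemma gaTerm_mul_sqrt_genRandic_le_card {α : ℝ} (hα : 0 ≤ α) (hδ : 0 < G.minDegree) :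
    gaTerm (((G.minDegree : ℝ) ^ α) ^ 2) (((G.maxDegree : ℝ) ^ α) ^ 2) *
      √(genRandic G α * genRandic G (-α)) ≤ #G.edgeFinset := by
  simp only [genRandic_eq_sum, randicWeight_neg]
  exact gaTerm_mul_sqrt_sum_mul_sum_inv_le (by positivity)
    (by gcongr; exact_mod_cast G.minDegree_le_maxDegree)
    fun e _ => G.randicWeight_mem_Icc hα e

lemma mul_sqrt_genRandic_le_GA1 {α : ℝ} (hα : 0 ≤ α) {k : ℝ} (hk₀ : G.minDegree = 0 → k ≤ 0)
    (hk : 0 < G.minDegree → k ≤ gaTerm G.minDegree G.maxDegree *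
      gaTerm (((G.minDegree : ℝ) ^ α) ^ 2) (((G.maxDegree : ℝ) ^ α) ^ 2)) :
    k * √(genRandic G α * genRandic G (-α)) ≤ GA1 G := by
  rcases G.minDegree.eq_zero_or_pos with hδ | hδ
  · exact (mul_nonpos_of_nonpos_of_nonneg (hk₀ hδ) (sqrt_nonneg _)).trans G.GA1_nonneg
  calc k * √(genRandic G α * genRandic G (-α))
      ≤ gaTerm G.minDegree G.maxDegree * (gaTerm (((G.minDegree : ℝ) ^ α) ^ 2)
          (((G.maxDegree : ℝ) ^ α) ^ 2) * √(genRandic G α * genRandic G (-α))) := by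
        rw [← mul_assoc]
        exact mul_le_mul_of_nonneg_right (hk hδ) (sqrt_nonneg _)
    _ ≤ gaTerm G.minDegree G.maxDegree * #G.edgeFinset :=
        mul_le_mul_of_nonneg_left (G.gaTerm_mul_sqrt_genRandic_le_card hα hδ)
          (gaTerm_nonneg (Nat.cast_nonneg _) (Nat.cast_nonneg _))
    _ ≤ GA1 G := (mul_comm _ _).trans_le (G.card_mul_gaTerm_le_GA1 hδ)

end SimpleGraph

theorem stmt18_general (G : SimpleGraph V) [Fintype V] [DecidableRel G.Adj]
    (hc : G.Connected) (α : ℝ) (hα : 0 < α) :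
    GA1 G ≤ Real.sqrt (genRandic G α * genRandic G (-α)) ∧
    (GraphRegular G → GA1 G = Real.sqrt (genRandic G α * genRandic G (-α))) ∧
    (GA1 G = Real.sqrt (genRandic G α * genRandic G (-α)) → GraphRegular G) ∧
    (α ≤ 1 →
      2 * (G.maxDegree : ℝ) ^ ((1 : ℝ) / 2) * (G.minDegree : ℝ) ^ ((3 : ℝ) / 2) /
          ((G.maxDegree : ℝ) ^ 2 + (G.minDegree : ℝ) ^ 2) *
        Real.sqrt (genRandic G α * genRandic G (-α)) ≤ GA1 G) ∧
    (1 ≤ α →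
      2 * (G.maxDegree : ℝ) ^ (α - 1 / 2) * (G.minDegree : ℝ) ^ (α + 1 / 2) /
          ((G.maxDegree : ℝ) ^ (2 * α) + (G.minDegree : ℝ) ^ (2 * α)) *
        Real.sqrt (genRandic G α * genRandic G (-α)) ≤ GA1 G) := by
  have hGA1 := G.GA1_le_card
  have hcard := G.card_le_sqrt_genRandic_mul α
  have hδΔ : (G.minDegree : ℝ) ≤ G.maxDegree := Nat.cast_le.2 G.minDegree_le_maxDegree
  refine ⟨hGA1.trans hcard, fun ⟨k, hk⟩ => ?_, fun heq => ?_, fun hα₁ => ?_, fun _ => ?_⟩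
  · rw [G.GA1_eq_card_iff.2 fun u v _ => (hk u).trans (hk v).symm,
      G.genRandic_mul_genRandic_neg_of_isRegularOfDegree hk, sqrt_sq (Nat.cast_nonneg _)]
  · exact G.graphRegular_of_forall_adj_degree_eq hc
      (G.GA1_eq_card_iff.1 (hGA1.antisymm (heq ▸ hcard)))
  · exact G.mul_sqrt_genRandic_le_GA1 hα.le (fun hδ => by simp [hδ]) fun hδ =>
      two_mul_sqrt_mul_rpow_three_halves_div_le (Nat.cast_pos.2 hδ) hδΔ hα.le hα₁
  · refine G.mul_sqrt_genRandic_le_GA1 hα.le (fun hδ => ?_) fun hδ =>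
      two_mul_rpow_sub_mul_rpow_add_div_le (Nat.cast_pos.2 hδ) hδΔ α
    rw [hδ, Nat.cast_zero, zero_rpow (by positivity)]
    simp

theorem stmt18 (G : SimpleGraph V) [Fintype V] [DecidableRel G.Adj]
    (hc : G.Connected) (hm : G.edgeFinset.Nonempty) (α : ℝ) (hα : 0 < α) :
    GA1 G ≤ Real.sqrt (genRandic G α * genRandic G (-α)) ∧
    (GraphRegular G → GA1 G = Real.sqrt (genRandic G α * genRandic G (-α))) ∧
    (GA1 G = Real.sqrt (genRandic G α * genRandic G (-α)) → GraphRegular G) ∧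
    (α ≤ 1 →
      2 * (G.maxDegree : ℝ) ^ ((1 : ℝ) / 2) * (G.minDegree : ℝ) ^ ((3 : ℝ) / 2) /
          ((G.maxDegree : ℝ) ^ 2 + (G.minDegree : ℝ) ^ 2) *
        Real.sqrt (genRandic G α * genRandic G (-α)) ≤ GA1 G) ∧
    (1 ≤ α →
      2 * (G.maxDegree : ℝ) ^ (α - 1 / 2) * (G.minDegree : ℝ) ^ (α + 1 / 2) /
          ((G.maxDegree : ℝ) ^ (2 * α) + (G.minDegree : ℝ) ^ (2 * α)) *
        Real.sqrt (genRandic G α * genRandic G (-α)) ≤ GA1 G) :=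
  stmt18_general G hc α hα
end

section
/- For any graph G with m edges and any real α ≠ 0, R_α(G) ≥ m·(NK*(G))^{α/m}, with equality if and only if the product d_u·d_v has the same value for every edge uv of G. -/
open Finset Real

variable {V : Type*}

/-! Apply AM–GM to the `m` numbers `(d_u d_v)^α`, whose product is `NK*(G)^α`. Equality in AM–GM
forces these numbers to coincide, and `x ↦ x^α` is injective on `[0, ∞)` for `α ≠ 0`. -/

namespace Real

variable {ι : Type*} (s : Finset ι) {z : ι → ℝ}

lemma card_mul_prod_rpow_inv_card_le_sum (hz : ∀ i ∈ s, 0 ≤ z i) :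
    (#s : ℝ) * (∏ i ∈ s, z i) ^ (#s : ℝ)⁻¹ ≤ ∑ i ∈ s, z i := by
  rcases s.eq_empty_or_nonempty with rfl | hs
  · simp
  have hcard : (0 : ℝ) < #s := by exact_mod_cast hs.card_pos
  have amgm := geom_mean_le_arith_mean_weighted s (fun _ ↦ (#s : ℝ)⁻¹) z
    (fun _ _ ↦ by positivity) (by simp [hcard.ne']) hz
  rw [finsetProd_rpow s z hz, ← mul_sum] at amgm
  rwa [inv_mul_eq_div, le_div_iff₀' hcard] at amgm

lemma sum_eq_card_mul_prod_rpow_inv_card_iff (hz : ∀ i ∈ s, 0 ≤ z i) :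
    ∑ i ∈ s, z i = (#s : ℝ) * (∏ i ∈ s, z i) ^ (#s : ℝ)⁻¹ ↔ ∀ j ∈ s, ∀ k ∈ s, z j = z k := by
  rcases s.eq_empty_or_nonempty with rfl | hs
  · simp
  have hcard : (0 : ℝ) < #s := by exact_mod_cast hs.card_pos
  have amgm := geom_mean_eq_arith_mean_weighted_iff_of_pos s (fun _ ↦ (#s : ℝ)⁻¹) z
    (fun _ _ ↦ by positivity) (by simp [hcard.ne']) hz
  rw [finsetProd_rpow s z hz, ← mul_sum] at amgm
  rw [← amgm, eq_comm, inv_mul_eq_div, eq_div_iff hcard.ne', mul_comm]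

end Real

namespace SimpleGraph

variable (G : SimpleGraph V) [Fintype V] [DecidableRel G.Adj]

def edgeDegreeProduct : Sym2 V → ℕ :=
  Sym2.lift ⟨fun u v ↦ G.degree u * G.degree v, fun _ _ ↦ mul_comm _ _⟩

@[simp]
lemma edgeDegreeProduct_mk (u v : V) : G.edgeDegreeProduct s(u, v) = G.degree u * G.degree v :=
  rfl

lemma NKstar_eq_prod_edgeDegreeProduct :
    NKstar G = ∏ e ∈ G.edgeFinset, (G.edgeDegreeProduct e : ℝ) :=
  prod_congr rfl fun e _ ↦ by induction e using Sym2.ind with | _ u v => simp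

lemma genRandic_eq_sum_edgeDegreeProduct_rpow (α : ℝ) :
    genRandic G α = ∑ e ∈ G.edgeFinset, (G.edgeDegreeProduct e : ℝ) ^ α :=
  sum_congr rfl fun e _ ↦ by induction e using Sym2.ind with | _ u v => simp

lemma exists_degree_mul_eq_iff_edgeDegreeProduct_eq :
    (∃ c : ℕ, ∀ u v : V, G.Adj u v → G.degree u * G.degree v = c) ↔
      ∀ e ∈ G.edgeFinset, ∀ e' ∈ G.edgeFinset, G.edgeDegreeProduct e = G.edgeDegreeProduct e' := by
  constructor
  · rintro ⟨c, hc⟩ e he e' he'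
    induction e using Sym2.ind
    induction e' using Sym2.ind
    simp_all
  · intro h
    rcases G.edgeFinset.eq_empty_or_nonempty with hempty | ⟨e₀, he₀⟩
    · exact ⟨0, fun u v huv ↦ by simp_all⟩
    · exact ⟨G.edgeDegreeProduct e₀, fun u v huv ↦ h s(u, v) (by simpa) e₀ he₀⟩

end SimpleGraph

theorem stmt19_general (G : SimpleGraph V) [Fintype V] [DecidableRel G.Adj]
    (α : ℝ) (hα0 : α ≠ 0) :
    (G.edgeFinset.card : ℝ) * NKstar G ^ (α / (G.edgeFinset.card : ℝ)) ≤ genRandic G α ∧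
    (genRandic G α = (G.edgeFinset.card : ℝ) * NKstar G ^ (α / (G.edgeFinset.card : ℝ)) ↔
      ∃ c : ℕ, ∀ u v : V, G.Adj u v → G.degree u * G.degree v = c) := by
  set D : Sym2 V → ℝ := fun e ↦ G.edgeDegreeProduct e
  have hD : ∀ e ∈ G.edgeFinset, 0 ≤ D e := fun e _ ↦ Nat.cast_nonneg _
  have hDα : ∀ e ∈ G.edgeFinset, 0 ≤ D e ^ α := fun e he ↦ rpow_nonneg (hD e he) α
  have hNK : NKstar G ^ (α / #G.edgeFinset) =
      (∏ e ∈ G.edgeFinset, D e ^ α) ^ (#G.edgeFinset : ℝ)⁻¹ := by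
    rw [G.NKstar_eq_prod_edgeDegreeProduct, finsetProd_rpow _ _ hD, div_eq_mul_inv,
      rpow_mul (prod_nonneg hD)]
  rw [hNK, G.genRandic_eq_sum_edgeDegreeProduct_rpow,
    G.exists_degree_mul_eq_iff_edgeDegreeProduct_eq, sum_eq_card_mul_prod_rpow_inv_card_iff _ hDα]
  refine ⟨card_mul_prod_rpow_inv_card_le_sum _ hDα, ?_⟩
  refine forall₂_congr fun e he ↦ forall₂_congr fun e' he' ↦ ?_
  rw [rpow_left_inj (hD e he) (hD e' he') hα0, Nat.cast_inj]

theorem stmt19 (G : SimpleGraph V) [Fintype V] [DecidableRel G.Adj]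
    (hc : G.Connected) (hm : G.edgeFinset.Nonempty) (α : ℝ) (hα0 : α ≠ 0) :
    (G.edgeFinset.card : ℝ) * NKstar G ^ (α / (G.edgeFinset.card : ℝ)) ≤ genRandic G α ∧
    (genRandic G α = (G.edgeFinset.card : ℝ) * NKstar G ^ (α / (G.edgeFinset.card : ℝ)) ↔
      ∃ c : ℕ, ∀ u v : V, G.Adj u v → G.degree u * G.degree v = c) :=
  stmt19_general G α hα0
end
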